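/- Let n ≥ 3 and k ≥ 3 be integers and let t₀ be the largest real root of f_{n,k} (i.e., f_{n,k}(t₀) = 0 and f_{n,k}(t) > 0 for all t > t₀). Then for every real number t > 0, the inequality (n−1)·√(1 + 4(k−2)t) + (n−2)·√(n²t² + 4(n−1)t) ≥ (n−1) + n²·t holds if and only if t ≤ t₀; moreover equality holds if and only if t = t₀. -/

import Mathlib

/-!
With `P = (n-2)√(1+4(k-2)t)·√(n²t²+4(n-1)t)` and `R = 2n²t(t - t₁)`, squaring gives
`LHS² - RHS² = 2(n-1)(P - R)` and `P² - R² = -4t·f(t)`. For `t ≤ t₁` we have `R ≤ 0 < P`, so the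
inequality is strict; for `t > t₁` the sign of `LHS - RHS` is that of `-f(t)`.

It remains to see that `f < 0` on `[t₁, t₀)`. Substituting `n = a + 3`, `k = b + 3` shows that
`f(t₁) < 0` and `f'(t₁) < 0`. Since `f'` is a convex quadratic, `f(t) ≤ f(t₁)` whenever `t ≥ t₁`
and `f'(t) ≤ 0`; hence `f' > 0` wherever `f ≥ 0` on `[t₁, ∞)`, so `f` has no nonnegative interior
maximum on `[t₁, t₀]`.
-/

/-- The cubic polynomial `f_{n,k}` from Theorem 1.4 of the paper. -/
noncomputable def fnk (n k : ℤ) (t : ℝ) : ℝ :=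
  (n : ℝ) ^ 4 * t ^ 3
    - (n : ℝ) ^ 2 * (((k : ℝ) - 1) * (n : ℝ) ^ 2 - 2 * ((k : ℝ) + 2) * (n : ℝ)
        + 2 * ((k : ℝ) + 2)) * t ^ 2
    - ((n : ℝ) - 1) * (3 * (n : ℝ) - ((k : ℝ) + 2)) * (((k : ℝ) - 1) * (n : ℝ)
        - ((k : ℝ) + 2)) * t
    - ((n : ℝ) - 1) * ((n : ℝ) - 2) ^ 2

/-- The derivative `f'_{n,k}` of the cubic `f_{n,k}`. -/
noncomputable def fnk' (n k : ℤ) (t : ℝ) : ℝ :=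
  3 * (n : ℝ) ^ 4 * t ^ 2
    - 2 * (n : ℝ) ^ 2 * (((k : ℝ) - 1) * (n : ℝ) ^ 2 - 2 * ((k : ℝ) + 2) * (n : ℝ)
        + 2 * ((k : ℝ) + 2)) * t
    - ((n : ℝ) - 1) * (3 * (n : ℝ) - ((k : ℝ) + 2)) * (((k : ℝ) - 1) * (n : ℝ)
        - ((k : ℝ) + 2))

/-- The quantity `t₁ = (n² + 2(n−1)(k−6))/(2n²)`. -/
noncomputable def tOne (n k : ℤ) : ℝ :=
  ((n : ℝ) ^ 2 + 2 * ((n : ℝ) - 1) * ((k : ℝ) - 6)) / (2 * (n : ℝ) ^ 2)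

theorem sign_sub_eq_sign_sq_sub {α : Type*} [CommRing α] [LinearOrder α]
    [IsStrictOrderedRing α] {x y : α} (hx : 0 ≤ x) (hy : 0 ≤ y) :
    SignType.sign (x - y) = SignType.sign (x ^ 2 - y ^ 2) := by
  rw [sq_sub_sq, sign_mul]
  rcases (add_nonneg hx hy).eq_or_lt with h | h
  · obtain ⟨rfl, rfl⟩ := (add_eq_zero_iff_of_nonneg hx hy).mp h.symm
    simp
  · rw [sign_pos h, one_mul]

open Set in
theorem neg_of_deriv_pos_of_nonneg {g : ℝ → ℝ} {a b : ℝ} (hg : ContinuousOn g (Icc a b))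
    (ha : g a < 0) (hb : g b = 0) (hderiv : ∀ x ∈ Ioo a b, 0 ≤ g x → 0 < deriv g x)
    {x : ℝ} (hx : x ∈ Ico a b) : g x < 0 := by
  by_contra! hgx
  have hax : a < x := hx.1.lt_of_ne (by rintro rfl; linarith)
  obtain ⟨M, hM, hmax⟩ := isCompact_Icc.exists_isMaxOn ⟨x, Ico_subset_Icc_self hx⟩ hg
  have hgM : g x ≤ g M := hmax (Ico_subset_Icc_self hx)
  obtain ⟨c, hc, hcmax, hgc⟩ : ∃ c ∈ Ioo a b, IsMaxOn g (Icc a b) c ∧ 0 ≤ g c := by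
    rcases hM.2.lt_or_eq with hMb | rfl
    · exact ⟨M, ⟨hM.1.lt_of_ne (by rintro rfl; linarith), hMb⟩, hmax, hgx.trans hgM⟩
    · exact ⟨x, ⟨hax, hx.2⟩, fun y hy => (show g y ≤ g M from hmax hy).trans (by linarith), hgx⟩
  have hc0 : deriv g c = 0 := (hcmax.isLocalMax (Icc_mem_nhds hc.1 hc.2)).deriv_eq_zero
  linarith [hderiv c hc hgc]

-- The trapezoidal rule for `∫ₐᵗ f'`, with error term `-f''' (t - a)³ / 12` and `f''' = 6n⁴`.
theorem fnk_sub_fnk (n k : ℤ) (a t : ℝ) :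
    fnk n k t - fnk n k a =
      (t - a) * (fnk' n k a + fnk' n k t) / 2 - (n : ℝ) ^ 4 * (t - a) ^ 3 / 2 := by
  unfold fnk fnk'
  ring

theorem hasDerivAt_fnk (n k : ℤ) (t : ℝ) : HasDerivAt (fnk n k) (fnk' n k t) t :=
  (((((hasDerivAt_pow 3 t).const_mul _).sub ((hasDerivAt_pow 2 t).const_mul _)).sub
    ((hasDerivAt_id' t).const_mul _)).sub_const _).congr_deriv (by unfold fnk'; ring)

theorem fnk_le_of_fnk'_nonpos {n k : ℤ} {a t : ℝ} (hat : a ≤ t) (ha : fnk' n k a ≤ 0)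
    (ht : fnk' n k t ≤ 0) : fnk n k t ≤ fnk n k a := by
  have hsum : (t - a) * (fnk' n k a + fnk' n k t) ≤ 0 :=
    mul_nonpos_of_nonneg_of_nonpos (sub_nonneg.2 hat) (add_nonpos ha ht)
  have hcube : 0 ≤ (n : ℝ) ^ 4 * (t - a) ^ 3 := by
    have := sub_nonneg.2 hat
    positivity
  linarith [fnk_sub_fnk n k a t]

theorem exists_nonneg_intCast_eq_add_three {n : ℤ} (hn : 3 ≤ n) :
    ∃ a : ℝ, 0 ≤ a ∧ (n : ℝ) = a + 3 :=
  ⟨n - 3, sub_nonneg.2 (by exact_mod_cast hn), by ring⟩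

theorem fnk_tOne_neg {n k : ℤ} (hn : 3 ≤ n) (hk : 3 ≤ k) : fnk n k (tOne n k) < 0 := by
  obtain ⟨a, ha, hna⟩ := exists_nonneg_intCast_eq_add_three hn
  obtain ⟨b, hb, hkb⟩ := exists_nonneg_intCast_eq_add_three hk
  unfold fnk tOne
  rw [hna, hkb, ← neg_pos]
  field_simp
  ring_nf
  positivity

theorem fnk'_tOne_neg {n k : ℤ} (hn : 3 ≤ n) (hk : 3 ≤ k) : fnk' n k (tOne n k) < 0 := by
  obtain ⟨a, ha, hna⟩ := exists_nonneg_intCast_eq_add_three hn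
  obtain ⟨b, hb, hkb⟩ := exists_nonneg_intCast_eq_add_three hk
  unfold fnk' tOne
  rw [hna, hkb, ← neg_pos]
  field_simp
  ring_nf
  positivity

theorem fnk_neg_of_tOne_le_of_fnk'_nonpos {n k : ℤ} (hn : 3 ≤ n) (hk : 3 ≤ k) {t : ℝ}
    (ht : tOne n k ≤ t) (hd : fnk' n k t ≤ 0) : fnk n k t < 0 :=
  (fnk_le_of_fnk'_nonpos ht (fnk'_tOne_neg hn hk).le hd).trans_lt (fnk_tOne_neg hn hk)

theorem fnk_neg_of_mem_Ico {n k : ℤ} (hn : 3 ≤ n) (hk : 3 ≤ k) {t₀ t : ℝ}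
    (ht₀ : fnk n k t₀ = 0) (ht : t ∈ Set.Ico (tOne n k) t₀) : fnk n k t < 0 := by
  refine neg_of_deriv_pos_of_nonneg
    (fun x _ => (hasDerivAt_fnk n k x).continuousAt.continuousWithinAt)
    (fnk_tOne_neg hn hk) ht₀ (fun x hx hfx => ?_) ht
  rw [(hasDerivAt_fnk n k x).deriv]
  by_contra! hd
  exact (fnk_neg_of_tOne_le_of_fnk'_nonpos hn hk hx.1.le hd).not_ge hfx

theorem tOne_lt_of_largest_root {n k : ℤ} (hn : 3 ≤ n) (hk : 3 ≤ k) {t₀ : ℝ}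
    (ht₀ : fnk n k t₀ = 0) (ht₀max : ∀ t : ℝ, t₀ < t → 0 < fnk n k t) : tOne n k < t₀ := by
  by_contra! h
  rcases h.lt_or_eq with h | h
  · exact (ht₀max _ h).not_gt (fnk_tOne_neg hn hk)
  · exact (fnk_tOne_neg hn hk).ne (h ▸ ht₀)

theorem sign_fnk_of_tOne_le {n k : ℤ} (hn : 3 ≤ n) (hk : 3 ≤ k) {t₀ : ℝ}
    (ht₀ : fnk n k t₀ = 0) (ht₀max : ∀ t : ℝ, t₀ < t → 0 < fnk n k t) {t : ℝ}
    (ht : tOne n k ≤ t) : SignType.sign (fnk n k t) = SignType.sign (t - t₀) := by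
  rcases lt_trichotomy t t₀ with h | rfl | h
  · rw [sign_neg (fnk_neg_of_mem_Ico hn hk ht₀ ⟨ht, h⟩), sign_neg (sub_neg.2 h)]
  · rw [ht₀, sub_self]
  · rw [sign_pos (ht₀max t h), sign_pos (sub_pos.2 h)]

noncomputable def sqrtSum (n k : ℤ) (t : ℝ) : ℝ :=
  ((n : ℝ) - 1) * Real.sqrt (1 + 4 * ((k : ℝ) - 2) * t)
    + ((n : ℝ) - 2) * Real.sqrt ((n : ℝ) ^ 2 * t ^ 2 + 4 * ((n : ℝ) - 1) * t)

noncomputable def affineRhs (n : ℤ) (t : ℝ) : ℝ := ((n : ℝ) - 1) + (n : ℝ) ^ 2 * t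

noncomputable def crossTerm (n k : ℤ) (t : ℝ) : ℝ :=
  ((n : ℝ) - 2) * Real.sqrt (1 + 4 * ((k : ℝ) - 2) * t)
    * Real.sqrt ((n : ℝ) ^ 2 * t ^ 2 + 4 * ((n : ℝ) - 1) * t)

theorem two_mul_sq_mul_sub_tOne {n : ℤ} (hn : n ≠ 0) (k : ℤ) (t : ℝ) :
    2 * (n : ℝ) ^ 2 * t * (t - tOne n k) =
      2 * (n : ℝ) ^ 2 * t ^ 2 - ((n : ℝ) ^ 2 + 2 * ((n : ℝ) - 1) * ((k : ℝ) - 6)) * t := by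
  unfold tOne
  field_simp

theorem sq_sqrtSum_sub_sq_affineRhs {n k : ℤ} (hn : 1 ≤ n) (hk : 2 ≤ k) {t : ℝ} (ht : 0 ≤ t) :
    sqrtSum n k t ^ 2 - affineRhs n t ^ 2 =
      2 * ((n : ℝ) - 1) * (crossTerm n k t - 2 * (n : ℝ) ^ 2 * t * (t - tOne n k)) := by
  have hn' : (1 : ℝ) ≤ n := by exact_mod_cast hn
  have hk' : (2 : ℝ) ≤ k := by exact_mod_cast hk
  have hA := Real.sq_sqrt (show 0 ≤ 1 + 4 * ((k : ℝ) - 2) * t by nlinarith)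
  have hB := Real.sq_sqrt (show 0 ≤ (n : ℝ) ^ 2 * t ^ 2 + 4 * ((n : ℝ) - 1) * t by nlinarith)
  rw [two_mul_sq_mul_sub_tOne (by omega)]
  unfold sqrtSum affineRhs crossTerm
  linear_combination ((n : ℝ) - 1) ^ 2 * hA + ((n : ℝ) - 2) ^ 2 * hB

theorem sq_crossTerm_sub_sq {n k : ℤ} (hn : 1 ≤ n) (hk : 2 ≤ k) {t : ℝ} (ht : 0 ≤ t) :
    crossTerm n k t ^ 2 - (2 * (n : ℝ) ^ 2 * t * (t - tOne n k)) ^ 2 = 4 * t * -fnk n k t := by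
  have hn' : (1 : ℝ) ≤ n := by exact_mod_cast hn
  have hk' : (2 : ℝ) ≤ k := by exact_mod_cast hk
  have hA := Real.sq_sqrt (show 0 ≤ 1 + 4 * ((k : ℝ) - 2) * t by nlinarith)
  have hB := Real.sq_sqrt (show 0 ≤ (n : ℝ) ^ 2 * t ^ 2 + 4 * ((n : ℝ) - 1) * t by nlinarith)
  rw [two_mul_sq_mul_sub_tOne (by omega)]
  unfold crossTerm fnk
  linear_combination
    ((n : ℝ) - 2) ^ 2 * Real.sqrt ((n : ℝ) ^ 2 * t ^ 2 + 4 * ((n : ℝ) - 1) * t) ^ 2 * hA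
      + ((n : ℝ) - 2) ^ 2 * (1 + 4 * ((k : ℝ) - 2) * t) * hB

theorem sqrtSum_nonneg {n : ℤ} (hn : 2 ≤ n) (k : ℤ) (t : ℝ) : 0 ≤ sqrtSum n k t := by
  have hn' : (2 : ℝ) ≤ n := by exact_mod_cast hn
  unfold sqrtSum
  exact add_nonneg (mul_nonneg (by linarith) (Real.sqrt_nonneg _))
    (mul_nonneg (by linarith) (Real.sqrt_nonneg _))

theorem affineRhs_nonneg {n : ℤ} (hn : 1 ≤ n) {t : ℝ} (ht : 0 ≤ t) : 0 ≤ affineRhs n t := by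
  have hn' : (1 : ℝ) ≤ n := by exact_mod_cast hn
  unfold affineRhs
  nlinarith

theorem crossTerm_pos {n k : ℤ} (hn : 3 ≤ n) (hk : 2 ≤ k) {t : ℝ} (ht : 0 < t) :
    0 < crossTerm n k t := by
  have hn' : (3 : ℝ) ≤ n := by exact_mod_cast hn
  have hk' : (2 : ℝ) ≤ k := by exact_mod_cast hk
  unfold crossTerm
  refine mul_pos (mul_pos (by linarith) (Real.sqrt_pos.2 ?_)) (Real.sqrt_pos.2 ?_) <;> nlinarith

theorem sign_sqrtSum_sub_affineRhs {n k : ℤ} (hn : 3 ≤ n) (hk : 3 ≤ k) {t₀ : ℝ}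
    (ht₀ : fnk n k t₀ = 0) (ht₀max : ∀ t : ℝ, t₀ < t → 0 < fnk n k t) {t : ℝ} (ht : 0 < t) :
    SignType.sign (sqrtSum n k t - affineRhs n t) = SignType.sign (t₀ - t) := by
  have hn' : (3 : ℝ) ≤ n := by exact_mod_cast hn
  have hcross : 0 < crossTerm n k t := crossTerm_pos hn (by omega) ht
  rw [sign_sub_eq_sign_sq_sub (sqrtSum_nonneg (by omega) k t) (affineRhs_nonneg (by omega) ht.le),
    sq_sqrtSum_sub_sq_affineRhs (by omega) (by omega) ht.le, sign_mul,
    sign_pos (by linarith : (0 : ℝ) < 2 * ((n : ℝ) - 1)), one_mul]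
  rcases le_or_gt t (tOne n k) with h | h
  · have hR : 2 * (n : ℝ) ^ 2 * t * (t - tOne n k) ≤ 0 :=
      mul_nonpos_of_nonneg_of_nonpos (by positivity) (sub_nonpos.2 h)
    rw [sign_pos (by linarith),
      sign_pos (sub_pos.2 (h.trans_lt (tOne_lt_of_largest_root hn hk ht₀ ht₀max)))]
  · have hR : 0 ≤ 2 * (n : ℝ) ^ 2 * t * (t - tOne n k) := by
      have := sub_pos.2 h
      positivity
    rw [sign_sub_eq_sign_sq_sub hcross.le hR, sq_crossTerm_sub_sq (by omega) (by omega) ht.le,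
      sign_mul, sign_pos (by positivity : (0 : ℝ) < 4 * t), one_mul, Left.sign_neg,
      sign_fnk_of_tOne_le hn hk ht₀ ht₀max h.le, ← Left.sign_neg, neg_sub]

/-- Let `t₀` be the largest real root of `f_{n,k}` (`n, k ≥ 3`). For every
`t > 0`, `(n−1)√(1 + 4(k−2)t) + (n−2)√(n²t² + 4(n−1)t) ≥ (n−1) + n²t` iff `t ≤ t₀`,
with equality iff `t = t₀`. -/
theorem sqrt_inequality_iff_le_largest_root (n k : ℤ) (hn : 3 ≤ n) (hk : 3 ≤ k)
    (t₀ : ℝ) (ht₀ : fnk n k t₀ = 0) (ht₀max : ∀ t : ℝ, t₀ < t → 0 < fnk n k t) :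
    ∀ t : ℝ, 0 < t →
      ((((n : ℝ) - 1) * Real.sqrt (1 + 4 * ((k : ℝ) - 2) * t)
          + ((n : ℝ) - 2) * Real.sqrt ((n : ℝ) ^ 2 * t ^ 2 + 4 * ((n : ℝ) - 1) * t)
          ≥ ((n : ℝ) - 1) + (n : ℝ) ^ 2 * t) ↔ t ≤ t₀) ∧
      ((((n : ℝ) - 1) * Real.sqrt (1 + 4 * ((k : ℝ) - 2) * t)
          + ((n : ℝ) - 2) * Real.sqrt ((n : ℝ) ^ 2 * t ^ 2 + 4 * ((n : ℝ) - 1) * t)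
          = ((n : ℝ) - 1) + (n : ℝ) ^ 2 * t) ↔ t = t₀) := by
  intro t ht
  have hsign := sign_sqrtSum_sub_affineRhs hn hk ht₀ ht₀max ht
  constructor
  · change affineRhs n t ≤ sqrtSum n k t ↔ _
    rw [← sub_nonneg, ← sign_nonneg_iff, hsign, sign_nonneg_iff, sub_nonneg]
  · change sqrtSum n k t = affineRhs n t ↔ _
    rw [← sub_eq_zero, ← sign_eq_zero_iff, hsign, sign_eq_zero_iff, sub_eq_zero, eq_comm]
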